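/- arXiv:1911.11648 — 2 statements merged into one kernel-verified Lean document; each statement's English description precedes it below -/
import Mathlib

section
/- Let G be a finite group and let K ≤ H be subgroups of G. If H is 𝔑-subnormal in G and H is nilpotent, then K is 𝔑-subnormal in G. -/
variable {G : Type*}

/-- `K` is a maximal subgroup of `L`: `K < L` and there is no subgroup strictly between. -/
def IsMaximalSubgroupOf [Group G] (K L : Subgroup G) : Prop :=
  K < L ∧ ∀ M : Subgroup G, K < M → M ≤ L → M = L

/-- The quotient of `L` by the normal core of `K` in `L` is nilpotent. -/
def NilpotentQuotByCore [Group G] (K L : Subgroup G) : Prop :=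
  Group.IsNilpotent (↥L ⧸ (K.subgroupOf L).normalCore)

/-- The quotient of `L` by the normal core of `K` in `L` has nilpotent derived subgroup
(i.e. belongs to the formation `𝔑𝔄`). -/
def NAQuotByCore [Group G] (K L : Subgroup G) : Prop :=
  Group.IsNilpotent ↥(commutator (↥L ⧸ (K.subgroupOf L).normalCore))

/-- `H` is `𝔑`-subnormal in `G`: `H = G` or there is a chain
`H = H₀ <· H₁ <· ... <· Hₙ = G` of maximal subgroups with each `Hᵢ/(Hᵢ₋₁)_{Hᵢ}` nilpotent. -/
def NSubnormal [Group G] (H : Subgroup G) : Prop :=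
  H = ⊤ ∨ ∃ (n : ℕ) (c : Fin (n + 1) → Subgroup G),
    c 0 = H ∧ c (Fin.last n) = ⊤ ∧
    ∀ i : Fin n, IsMaximalSubgroupOf (c i.castSucc) (c i.succ) ∧
      NilpotentQuotByCore (c i.castSucc) (c i.succ)

/-- `H` is `𝔑𝔄`-subnormal in `G`: `H = G` or there is a chain
`H = H₀ <· H₁ <· ... <· Hₙ = G` of maximal subgroups with each `Hᵢ/(Hᵢ₋₁)_{Hᵢ}`
having nilpotent derived subgroup. -/
def NASubnormal [Group G] (H : Subgroup G) : Prop :=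
  H = ⊤ ∨ ∃ (n : ℕ) (c : Fin (n + 1) → Subgroup G),
    c 0 = H ∧ c (Fin.last n) = ⊤ ∧
    ∀ i : Fin n, IsMaximalSubgroupOf (c i.castSucc) (c i.succ) ∧
      NAQuotByCore (c i.castSucc) (c i.succ)

/-- `H` is `𝔑`-abnormal in `G`: for all `K`, `L` with `H ≤ K` and `K` maximal in `L`,
the quotient `L/K_L` is not nilpotent. -/
def NAbnormal [Group G] (H : Subgroup G) : Prop :=
  ∀ K L : Subgroup G, H ≤ K → IsMaximalSubgroupOf K L → ¬ NilpotentQuotByCore K L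

/-- `H` is `𝔑𝔄`-abnormal in `G`: for all `K`, `L` with `H ≤ K` and `K` maximal in `L`,
the quotient `L/K_L` does not have nilpotent derived subgroup. -/
def NAAbnormal [Group G] (H : Subgroup G) : Prop :=
  ∀ K L : Subgroup G, H ≤ K → IsMaximalSubgroupOf K L → ¬ NAQuotByCore K L

/-- `N` is the nilpotent residual `G^𝔑` of `G`: the smallest normal subgroup
with nilpotent quotient. -/
def IsNilpotentResidual [Group G] (N : Subgroup G) : Prop :=
  ∃ hN : N.Normal,
    haveI := hN
    Group.IsNilpotent (G ⧸ N) ∧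
      ∀ M : Subgroup G, ∀ hM : M.Normal,
        (haveI := hM; Group.IsNilpotent (G ⧸ M)) → N ≤ M

/-- `N` is the `𝔑𝔄`-residual `G^{𝔑𝔄}` of `G`: the smallest normal subgroup whose
quotient has nilpotent derived subgroup. -/
def IsNAResidual [Group G] (N : Subgroup G) : Prop :=
  ∃ hN : N.Normal,
    haveI := hN
    Group.IsNilpotent ↥(commutator (G ⧸ N)) ∧
      ∀ M : Subgroup G, ∀ hM : M.Normal,
        (haveI := hM; Group.IsNilpotent ↥(commutator (G ⧸ M))) → N ≤ M

/-- `H` is an `𝔑`-projector of `G`: for every normal `N ⊴ G`, the image `HN/N` is a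
maximal nilpotent subgroup of `G/N`. -/
def IsNProjector [Group G] (H : Subgroup G) : Prop :=
  ∀ N : Subgroup G, ∀ hN : N.Normal,
    haveI := hN
    Group.IsNilpotent ↥(H.map (QuotientGroup.mk' N)) ∧
      ∀ K : Subgroup (G ⧸ N), Group.IsNilpotent ↥K →
        H.map (QuotientGroup.mk' N) ≤ K → K = H.map (QuotientGroup.mk' N)

/-
Every quotient of a nilpotent group is nilpotent, so if `K` is maximal in a nilpotent `L` then
`L/K_L` is nilpotent. Hence every step of a maximal chain from `K` up to the nilpotent `H` (such a
chain exists as `G` is finite) is an `𝔑`-step, and appending a chain witnessing the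
`𝔑`-subnormality of `H` gives one for `K`.
-/

def nSubnormalStep (G : Type*) [Group G] : SetRel (Subgroup G) (Subgroup G) :=
  {p | IsMaximalSubgroupOf p.1 p.2 ∧ NilpotentQuotByCore p.1 p.2}

section

variable [Group G]

theorem isMaximalSubgroupOf_iff_covBy {K L : Subgroup G} : IsMaximalSubgroupOf K L ↔ K ⋖ L :=
  and_congr_right fun _ =>
    ⟨fun h _ hKM hML => (h _ hKM hML.le ▸ hML).false,
      fun h _ hKM hML => hML.eq_of_not_lt (h hKM)⟩

theorem nSubnormal_iff_exists_relSeries {H : Subgroup G} :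
    NSubnormal H ↔ ∃ p : RelSeries (nSubnormalStep G), p.head = H ∧ p.last = ⊤ := by
  constructor
  · rintro (rfl | ⟨n, c, hc0, hcn, hstep⟩)
    · exact ⟨RelSeries.singleton _ ⊤, rfl, rfl⟩
    · exact ⟨⟨n, c, hstep⟩, hc0, hcn⟩
  · rintro ⟨p, hp0, hpn⟩
    exact Or.inr ⟨p.length, p, hp0, hpn, p.step⟩

theorem Subgroup.isNilpotent_of_le {M H : Subgroup G} (hMH : M ≤ H) [Group.IsNilpotent H] :
    Group.IsNilpotent M :=
  Group.nilpotent_of_mulEquiv (Subgroup.subgroupOfEquivOfLe hMH)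

theorem mem_nSubnormalStep_of_covBy {K L : Subgroup G} (hKL : K ⋖ L) [Group.IsNilpotent L] :
    (K, L) ∈ nSubnormalStep G :=
  ⟨isMaximalSubgroupOf_iff_covBy.mpr hKL, by unfold NilpotentQuotByCore; infer_instance⟩

theorem exists_relSeries_nSubnormalStep_of_le [Finite G] {K H : Subgroup G} (hKH : K ≤ H)
    [Group.IsNilpotent H] : ∃ p : RelSeries (nSubnormalStep G), p.head = K ∧ p.last = H := by
  induction K using WellFoundedGT.induction with
  | _ K ih =>
    rcases hKH.eq_or_lt with rfl | hKH
    · exact ⟨RelSeries.singleton _ K, rfl, rfl⟩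
    obtain ⟨M, hKM, hMH⟩ := exists_covBy_le_of_lt hKH
    obtain ⟨p, hp0, hpn⟩ := ih M hKM.lt hMH
    have := Subgroup.isNilpotent_of_le hMH
    exact ⟨p.cons K (hp0 ▸ mem_nSubnormalStep_of_covBy hKM), by simp, by simpa⟩

end

theorem stmt_6 [Group G] [Finite G] (K H : Subgroup G) (hKH : K ≤ H)
    (hH : NSubnormal H) (hnil : Group.IsNilpotent ↥H) : NSubnormal K := by
  obtain ⟨q, hq0, hqn⟩ := nSubnormal_iff_exists_relSeries.mp hH
  obtain ⟨p, hp0, hpn⟩ := exists_relSeries_nSubnormalStep_of_le hKH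
  exact nSubnormal_iff_exists_relSeries.mpr
    ⟨p.smash q (hpn.trans hq0.symm), by simpa using hp0, by simpa using hqn⟩
end

section
/- Let G be a finite soluble group such that G = G′ ⋊ ⟨x⟩ for some element x (i.e. G′⟨x⟩ = G and G′ ∩ ⟨x⟩ = 1, where G′ is the derived subgroup), where ⟨x⟩ is a Sylow p-subgroup of G for some prime p and ⟨x⟩ is self-normalizing in G. If H is a subgroup of G whose order is divisible by the order of x, then H is self-normalizing in G (N_G(H) = H). -/
variable {G : Type*}

/-!
Since `|⟨x⟩|` divides `|H|`, the subgroup `H` contains a Sylow `p`-subgroup `Q` of `G`. All Sylow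
`p`-subgroups have normalizers of the same index, so `Q`, like `⟨x⟩`, is self-normalizing. If `g`
normalizes `H`, then `Q` and `Q ^ g` are Sylow in `H`, hence conjugate by some `h ∈ H`; so
`hg ∈ N_G(Q) ≤ H` and `g ∈ H`.
-/

namespace Sylow

open Subgroup

variable [Group G] {p : ℕ} [Fact p.Prime]

theorem normalizer_eq_self_of_normalizer_le {H : Subgroup G} [Finite (Sylow p H)]
    (P : Sylow p G) (hP : normalizer (P : Set G) ≤ H) : normalizer (H : Set G) = H := by
  have hPH : (P : Subgroup G) ≤ H := le_normalizer.trans hP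
  refine le_antisymm (fun g hg => ?_) le_normalizer
  have hgPH : ((g • P : Sylow p G) : Subgroup G) ≤ H := by
    rintro - ⟨y, hy, rfl⟩
    exact (mem_normalizer_iff.mp hg y).mp (hPH hy)
  obtain ⟨h, hh⟩ := MulAction.exists_smul_eq H ((g • P).subtype hgPH) (P.subtype hPH)
  simp_rw [smul_subtype, Subgroup.smul_def, smul_smul] at hh
  have hhg : (h : G) * g ∈ H := hP (smul_eq_iff_mem_normalizer.mp (subtype_injective hh))
  simpa using H.mul_mem (H.inv_mem h.2) hhg

theorem normalizer_eq_self_of_normalizer_eq [Finite G] {P : Sylow p G}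
    (hP : normalizer (P : Set G) = P) (Q : Sylow p G) : normalizer (Q : Set G) = Q := by
  have hindex : (normalizer (Q : Set G)).index = (P : Subgroup G).index := by
    rw [← card_eq_index_normalizer, card_eq_index_normalizer P, hP]
  have hcard : Nat.card (normalizer (Q : Set G)) = Nat.card Q := by
    refine Nat.eq_of_mul_eq_mul_right
      (Nat.pos_of_ne_zero (P : Subgroup G).index_ne_zero_of_finite) ?_
    rw [Q.card_eq_multiplicity, ← P.card_eq_multiplicity, card_mul_index, ← hindex,
      card_mul_index]
  exact (eq_of_le_of_card_ge le_normalizer hcard.le).symm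

theorem exists_le_of_card_dvd [Finite G] (P : Sylow p G) {H : Subgroup G}
    (hdvd : Nat.card P ∣ Nat.card H) : ∃ Q : Sylow p G, (Q : Subgroup G) ≤ H := by
  obtain ⟨Q⟩ : Nonempty (Sylow p H) := inferInstance
  obtain ⟨R, hQR⟩ := (Q.2.map H.subtype).exists_le_sylow
  have hcard : Nat.card R ≤ Nat.card (Q.map H.subtype) := by
    rw [P.card_eq_multiplicity] at hdvd
    rw [card_map_of_injective H.subtype_injective, R.card_eq_multiplicity]
    exact Nat.le_of_dvd Nat.card_pos (Q.pow_dvd_card_of_pow_dvd_card hdvd)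
  exact ⟨R, eq_of_le_of_card_ge hQR hcard ▸ map_subtype_le _⟩

end Sylow

theorem stmt_18_general [Group G] [Finite G] (p : ℕ) (hp : p.Prime) (x : G)
    (hsyl : ∃ P : Sylow p G, (P : Subgroup G) = Subgroup.zpowers x)
    (hself : Subgroup.normalizer (Subgroup.zpowers x : Set G) = Subgroup.zpowers x)
    (H : Subgroup G) (hdvd : orderOf x ∣ Nat.card ↥H) :
    Subgroup.normalizer (H : Set G) = H := by
  have := Fact.mk hp
  obtain ⟨P, hPx⟩ := hsyl
  have hPself : Subgroup.normalizer (P : Set G) = P := by rw [← P.coe_coe, hPx, hself]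
  have hPH : Nat.card P ∣ Nat.card H := by rwa [hPx, Nat.card_zpowers]
  obtain ⟨Q, hQH⟩ := P.exists_le_of_card_dvd hPH
  exact Q.normalizer_eq_self_of_normalizer_le
    ((Sylow.normalizer_eq_self_of_normalizer_eq hPself Q).le.trans hQH)

theorem stmt_18 [Group G] [Finite G] [Group.IsSolvable G] (p : ℕ) (hp : p.Prime) (x : G)
    (hsup : commutator G ⊔ Subgroup.zpowers x = ⊤)
    (hinf : commutator G ⊓ Subgroup.zpowers x = ⊥)
    (hsyl : ∃ P : Sylow p G, (P : Subgroup G) = Subgroup.zpowers x)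
    (hself : Subgroup.normalizer (Subgroup.zpowers x : Set G) = Subgroup.zpowers x)
    (H : Subgroup G) (hdvd : orderOf x ∣ Nat.card ↥H) :
    Subgroup.normalizer (H : Set G) = H :=
  stmt_18_general p hp x hsyl hself H hdvd
end
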